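/- arXiv:1607.04514 — 11 statements merged into one kernel-verified Lean document; each statement's English description precedes it below -/
import Mathlib

section
/- Let g(x) = γ·x·ln x + (1−x)·ln(1−x) with γ = −11/25. Then for all x with 0 < x ≤ 5/43, we have (1−x)^(−(1−x)) ≤ x^(γx). -/
private lemma poly_aux (x : ℝ) (hx : 0 < x) (hx' : x ≤ 5/43) :
    (1-x)*(x + x^2/2 + x^3/3) + x^4*(43/38) ≤ (11/25)*x*(157/50 - 43/5*x) := by
  nlinarith [mul_nonneg (mul_nonneg hx.le hx.le) (show (0:ℝ) ≤ 5/43 - x by linarith),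
    mul_nonneg hx.le (show (0:ℝ) ≤ 5/43 - x by linarith),
    mul_nonneg (mul_nonneg hx.le hx.le) (mul_nonneg hx.le (show (0:ℝ) ≤ 5/43 - x by linarith)),
    mul_nonneg hx.le (mul_nonneg (show (0:ℝ) ≤ 5/43 - x by linarith) (show (0:ℝ) ≤ 5/43 - x by linarith))]


theorem stmt_0 (x : ℝ) (hx : 0 < x) (hx' : x ≤ 5/43) :
    (1 - x) ^ (-(1 - x)) ≤ x ^ ((-11/25 : ℝ) * x) := by
  have hx1 : x < 1 := by linarith
  have h1x : (0:ℝ) < 1 - x := by linarith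
  rw [Real.rpow_def_of_pos h1x, Real.rpow_def_of_pos hx, Real.exp_le_exp]
  set L1 := Real.log (1 - x) with hL1def
  set L2 := Real.log x with hL2def
  -- series bound for log (1 - x)
  have habs := Real.abs_log_sub_add_sum_range_le (x := x)
      (by rw [abs_of_pos hx]; linarith) 3
  have hsum : (∑ i ∈ Finset.range 3, x ^ (i+1) / (i+1)) = x + x^2/2 + x^3/3 := by
    simp [Finset.sum_range_succ]
    ring
  rw [hsum, abs_of_pos hx] at habs
  have hL1 : -(x + x^2/2 + x^3/3) - x^4/(1-x) ≤ L1 := by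
    have h := (abs_le.mp habs).1
    linarith
  -- numeric bound log (43/5) ≥ 107/50
  have hlog435 : (107/50 : ℝ) ≤ Real.log (43/5) := by
    rw [Real.le_log_iff_exp_le (by norm_num)]
    have hsplit : Real.exp (107/50 : ℝ) = Real.exp 1 * Real.exp 1 * Real.exp (7/50) := by
      rw [← Real.exp_add, ← Real.exp_add]; norm_num
    have h750 : Real.exp (7/50 : ℝ) ≤ 50/43 := by
      have h1 := Real.add_one_le_exp (-(7/50) : ℝ)
      have h2 : Real.exp (-(7/50) : ℝ) * Real.exp (7/50 : ℝ) = 1 := by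
        rw [← Real.exp_add]; simp
      nlinarith [Real.exp_pos (7/50 : ℝ)]
    have he := Real.exp_one_lt_d9
    have hep := Real.exp_pos (1:ℝ)
    have hep2 := Real.exp_pos (7/50 : ℝ)
    rw [hsplit]
    nlinarith
  -- tangent bound for log x
  have hL2 : L2 ≤ 43/5*x - 1 - Real.log (43/5) := by
    have h := Real.log_le_sub_one_of_pos (show (0:ℝ) < x*(43/5) by positivity)
    rw [Real.log_mul (ne_of_gt hx) (by norm_num)] at h
    rw [hL2def]; linarith
  have hL2' : L2 ≤ 43/5*x - 1 - 107/50 := by linarith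
  -- bound on x^4/(1-x)
  have hx4 : x^4/(1-x) ≤ x^4 * (43/38) := by
    rw [div_le_iff₀ h1x]
    nlinarith [pow_pos hx 4, pow_nonneg hx.le 4]
  have e1 : -(1-x) * L1 ≤ (1-x)*(x + x^2/2 + x^3/3) + x^4 * (43/38) := by
    have h : -L1 ≤ (x + x^2/2 + x^3/3) + x^4/(1-x) := by linarith
    have h2 : (1-x) * (-L1) ≤ (1-x) * ((x + x^2/2 + x^3/3) + x^4/(1-x)) :=
      mul_le_mul_of_nonneg_left h h1x.le
    have h3 : (1-x) * (x^4/(1-x)) = x^4 := by field_simp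
    have h4 : (1-x) * (x^4/(1-x)) ≤ x^4 * (43/38) := by rw [h3]; nlinarith [pow_nonneg hx.le 4]
    nlinarith [h2]
  have e2 : (11/25)*x*(157/50 - 43/5*x) ≤ (-11/25*x) * L2 := by
    have h : -L2 ≥ 157/50 - 43/5*x := by linarith
    nlinarith [mul_le_mul_of_nonneg_left h (show (0:ℝ) ≤ 11/25*x by positivity)]
  have poly := poly_aux x hx hx'
  linarith
end

section
/- For all x with 0 < x ≤ 1/5, we have (1−x)^(−(1−x)) ≤ x^(γx) with γ = −23/40. -/
open Real

lemma log5_lb : (1.6:ℝ) ≤ Real.log 5 := by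
  have h8 : Real.exp 8 < 3125 := by
    have h := Real.exp_one_lt_d9
    have : Real.exp 8 = Real.exp 1 ^ (8:ℕ) := by
      rw [← Real.exp_nat_mul]; norm_num
    rw [this]
    calc Real.exp 1 ^ (8:ℕ) ≤ 2.7182818286 ^ (8:ℕ) :=
          pow_le_pow_left₀ (Real.exp_pos 1).le h.le 8
    _ < 3125 := by norm_num
  have h5 : Real.exp (8/5) < 5 := by
    have hpow : Real.exp (8/5) ^ (5:ℕ) = Real.exp 8 := by
      rw [← Real.exp_nat_mul]; norm_num
    have : Real.exp (8/5) ^ (5:ℕ) < 5 ^ (5:ℕ) := by rw [hpow]; norm_num; linarith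
    exact lt_of_pow_lt_pow_left₀ 5 (by norm_num) this
  rw [show (1.6:ℝ) = 8/5 by norm_num]
  exact (Real.lt_log_iff_exp_lt (by norm_num)).2 h5 |>.le

lemma logA {x : ℝ} (hx : 0 < x) (hx' : x ≤ 1/5) :
    -Real.log (1 - x) ≤ x + x^2/2 + x^3/3 + (5/4)*x^4 := by
  have habs : |x| < 1 := by rw [abs_of_pos hx]; linarith
  have h := Real.abs_log_sub_add_sum_range_le habs 3
  have hsum : (∑ i ∈ Finset.range 3, x ^ (i + 1) / (i + 1)) = x + x^2/2 + x^3/3 := by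
    simp [Finset.sum_range_succ]; ring
  rw [hsum, abs_of_pos hx] at h
  have h2 : x + x^2/2 + x^3/3 + Real.log (1-x) ≥ -(x^4/(1-x)) := by
    have := abs_le.1 h; linarith [this.1]
  have h3 : x^4/(1-x) ≤ (5/4)*x^4 := by
    rw [div_le_iff₀ (by linarith)]
    nlinarith [pow_nonneg hx.le 4]
  linarith

theorem stmt_1 (x : ℝ) (hx : 0 < x) (hx' : x ≤ 1/5) :
    (1 - x) ^ (-(1 - x)) ≤ x ^ ((-23/40 : ℝ) * x) := by
  have h1x : (0:ℝ) < 1 - x := by linarith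
  rw [Real.rpow_def_of_pos h1x, Real.rpow_def_of_pos hx, Real.exp_le_exp]
  have hA := logA hx hx'
  have hl1 : Real.log (1 - x) ≤ 0 := Real.log_nonpos (by linarith) (by linarith)
  have hlx : Real.log x ≤ (5*x - 1) - Real.log 5 := by
    have : Real.log x = Real.log (5*x) - Real.log 5 := by
      rw [Real.log_mul (by norm_num) hx.ne']; ring
    rw [this]
    have := Real.log_le_sub_one_of_pos (show (0:ℝ) < 5*x by linarith)
    linarith
  have hL := log5_lb
  nlinarith [sq_nonneg x, sq_nonneg (x - 1/5), mul_pos hx hx, pow_pos hx 3, pow_pos hx 4,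
    mul_nonneg hx.le (sub_nonneg.2 hL)]
end

section
/- For all x with 0 < x ≤ 1/5, we have 3^x ≤ x^(−7x/10). -/
theorem stmt_3 (x : ℝ) (hx : 0 < x) (hx' : x ≤ 1/5) :
    (3 : ℝ) ^ x ≤ x ^ ((-7/10 : ℝ) * x) := by
  rw [Real.rpow_def_of_pos (by norm_num), Real.rpow_def_of_pos hx]
  apply Real.exp_le_exp.mpr
  have h1 : Real.log x ≤ Real.log (1/5) := Real.log_le_log hx hx'
  have h15 : Real.log (1/5 : ℝ) = -Real.log 5 := by
    rw [one_div, Real.log_inv]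
  have h2 : (10:ℝ) * Real.log 3 ≤ 7 * Real.log 5 := by
    have := Real.log_le_log (by positivity : (0:ℝ) < 3^10) (by norm_num : (3:ℝ)^10 ≤ 5^7)
    rwa [Real.log_pow, Real.log_pow] at this
  nlinarith [hx, h1, h15, h2]
end

section
/- For all x with 0 < x ≤ 9/50, we have 8^x ≤ x^(−5x/4). -/
theorem stmt_4 (x : ℝ) (hx : 0 < x) (hx' : x ≤ 9/50) :
    (8 : ℝ) ^ x ≤ x ^ ((-5/4 : ℝ) * x) := by
  rw [Real.rpow_def_of_pos (by norm_num : (0:ℝ) < 8), Real.rpow_def_of_pos hx,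
    Real.exp_le_exp]
  have h1 : Real.log x ≤ Real.log (9/50) := Real.log_le_log hx hx'
  have h2 : (4:ℝ) * Real.log 8 + 5 * Real.log (9/50) ≤ 0 := by
    have e : (4:ℝ) * Real.log 8 + 5 * Real.log (9/50) =
        Real.log ((8:ℝ)^(4:ℕ) * (9/50:ℝ)^(5:ℕ)) := by
      rw [Real.log_mul (by norm_num) (by norm_num), Real.log_pow, Real.log_pow]
      push_cast; ring
    rw [e]
    exact Real.log_nonpos (by norm_num) (by norm_num)
  nlinarith [mul_le_mul_of_nonneg_left h1 hx.le]
end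

section
/- Let F = F_q be a finite field of size q, let 0 ≤ m ≤ n, and let A be an m × n matrix over F of rank m. If B is an (n+ℓ) × n matrix obtained by appending n − m + ℓ rows chosen uniformly and independently at random from F^(1×n) to A, then the probability that rank(B) < n is at most q^(−ℓ). -/
/-! If `rank B < n`, some nonzero `x` lies in `ker A` and is orthogonal to every appended row.
`ker A` has `q ^ (n - m)` elements, and for a fixed nonzero `x` each uniform row is orthogonal
to `x` with probability `1 / q`, independently. The union bound over `x` gives
`q ^ (n - m) * q ^ (-(n - m + ℓ)) = q ^ (-ℓ)`. -/

open Matrix Module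

variable {F : Type*} [Field F] {m n : Type*} [Fintype n]

namespace Matrix

theorem rank_add_finrank_ker_mulVecLin (A : Matrix m n F) :
    A.rank + finrank F (LinearMap.ker A.mulVecLin) = Fintype.card n := by
  rw [rank, LinearMap.finrank_range_add_finrank_ker, finrank_fintype_fun_eq_card]

theorem rank_lt_card_iff_exists_mulVec_eq_zero (A : Matrix m n F) :
    A.rank < Fintype.card n ↔ ∃ x ≠ 0, A *ᵥ x = 0 := by
  rw [← A.rank_add_finrank_ker_mulVecLin, Nat.lt_add_right_iff_pos,
    finrank_pos_iff_exists_ne_zero]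
  simp [and_comm]

theorem natCard_ker_mulVecLin [Finite F] (A : Matrix m n F) :
    Nat.card (LinearMap.ker A.mulVecLin) = Nat.card F ^ (Fintype.card n - A.rank) := by
  rw [natCard_eq_pow_finrank (K := F), ← A.rank_add_finrank_ker_mulVecLin,
    Nat.add_sub_cancel_left]

end Matrix

theorem natCard_dotProduct_eq_zero_mul [Finite F] {x : n → F} (hx : x ≠ 0) :
    Nat.card {v : n → F // v ⬝ᵥ x = 0} * Nat.card F = Nat.card (n → F) := by
  classical
  set f : Dual F (n → F) := dotProductBilin F F |>.flip x
  have hf : f ≠ 0 := by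
    obtain ⟨i, hi⟩ := Function.ne_iff.mp hx
    intro h
    exact hi (by simpa [f] using LinearMap.congr_fun h (Pi.single i 1))
  have h := Dual.finrank_ker_add_one_of_ne_zero hf
  have hker : Nat.card {v : n → F // v ⬝ᵥ x = 0} = Nat.card (LinearMap.ker f) := rfl
  rw [hker, natCard_eq_pow_finrank (K := F), natCard_eq_pow_finrank (K := F) (V := n → F), ← h,
    pow_succ]

theorem natCard_forall_dotProduct_eq_zero_mul [Finite F] {ι : Type*} [Fintype ι]
    {x : n → F} (hx : x ≠ 0) :
    Nat.card {r : ι → n → F // ∀ i, r i ⬝ᵥ x = 0} * Nat.card F ^ Fintype.card ι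
      = Nat.card (ι → n → F) := by
  rw [Nat.card_congr (Equiv.subtypePiEquivPi (p := fun _ v => v ⬝ᵥ x = 0)), Nat.card_pi,
    Nat.card_pi, ← Finset.card_univ, ← Finset.prod_const, ← Finset.prod_mul_distrib]
  simp only [natCard_dotProduct_eq_zero_mul hx]

theorem natCard_rank_fromRows_lt_mul_le [Fintype F] {ι : Type*} [Fintype ι] (A : Matrix m n F) :
    Nat.card {r : ι → n → F // (fromRows A (of r)).rank < Fintype.card n}
        * Nat.card F ^ Fintype.card ι
      ≤ Nat.card (LinearMap.ker A.mulVecLin) * Nat.card (ι → n → F) := by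
  classical
  set S := Finset.univ.filter fun x : n → F => x ≠ 0 ∧ A *ᵥ x = 0
  have hcover : Nat.card {r : ι → n → F // (fromRows A (of r)).rank < Fintype.card n}
      ≤ ∑ x ∈ S, Nat.card {r : ι → n → F // ∀ i, r i ⬝ᵥ x = 0} := by
    simp only [Nat.card_eq_fintype_card, Fintype.card_subtype]
    refine (Finset.card_le_card fun r hr => ?_).trans Finset.card_biUnion_le
    obtain ⟨x, hx0, hx⟩ :=
      (rank_lt_card_iff_exists_mulVec_eq_zero _).mp (Finset.mem_filter.mp hr).2
    rw [fromRows_mulVec, funext_iff, Sum.forall] at hx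
    refine Finset.mem_biUnion.mpr ⟨x, ?_, ?_⟩
    · exact Finset.mem_filter.mpr ⟨Finset.mem_univ _, hx0, funext hx.1⟩
    · exact Finset.mem_filter.mpr ⟨Finset.mem_univ _, hx.2⟩
  have hS : S.card ≤ Nat.card (LinearMap.ker A.mulVecLin) := by
    rw [Nat.card_eq_fintype_card, Fintype.card_subtype]
    exact Finset.card_le_card fun x hx => by simp_all [S]
  calc _ ≤ (∑ x ∈ S, Nat.card {r : ι → n → F // ∀ i, r i ⬝ᵥ x = 0})
        * Nat.card F ^ Fintype.card ι := Nat.mul_le_mul_right _ hcover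
    _ = S.card * Nat.card (ι → n → F) := by
      rw [Finset.sum_mul, Finset.card_eq_sum_ones, Finset.sum_mul]
      exact Finset.sum_congr rfl fun x hx =>
        (natCard_forall_dotProduct_eq_zero_mul (Finset.mem_filter.mp hx).2.1).trans
          (one_mul _).symm
    _ ≤ _ := Nat.mul_le_mul_right _ hS

theorem stmt_7_general (F : Type) [Field F] [Fintype F]
    (m n ℓ : ℕ)
    (A : Matrix (Fin m) (Fin n) F) (hA : A.rank = m) :
    (Nat.card {r : Fin (n - m + ℓ) → Fin n → F //
        (Matrix.fromRows A (Matrix.of r)).rank < n} : ℝ) /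
      (Fintype.card (Fin (n - m + ℓ) → Fin n → F) : ℝ)
      ≤ (Fintype.card F : ℝ) ^ (-(ℓ : ℤ)) := by
  have hcount := natCard_rank_fromRows_lt_mul_le (ι := Fin (n - m + ℓ)) A
  rw [A.natCard_ker_mulVecLin, hA, Fintype.card_fin, Fintype.card_fin] at hcount
  have hcancel : Nat.card {r : Fin (n - m + ℓ) → Fin n → F //
      (Matrix.fromRows A (Matrix.of r)).rank < n} * Nat.card F ^ ℓ
        ≤ Nat.card (Fin (n - m + ℓ) → Fin n → F) := by
    refine Nat.le_of_mul_le_mul_left ?_ (pow_pos (Nat.card_pos (α := F)) (n - m))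
    exact (le_of_eq (by ring)).trans hcount
  rw [Nat.card_eq_fintype_card (α := F),
    Nat.card_eq_fintype_card (α := Fin (n - m + ℓ) → Fin n → F)] at hcancel
  have hq : (0 : ℝ) < Fintype.card F := Nat.cast_pos.mpr Fintype.card_pos
  rw [div_le_iff₀ (by positivity), _root_.zpow_neg, zpow_natCast, inv_mul_eq_div,
    le_div_iff₀ (pow_pos hq _)]
  exact_mod_cast hcancel

theorem stmt_7 (F : Type) [Field F] [Fintype F] [DecidableEq F]
    (m n ℓ : ℕ) (hmn : m ≤ n)
    (A : Matrix (Fin m) (Fin n) F) (hA : A.rank = m) :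
    (Nat.card {r : Fin (n - m + ℓ) → Fin n → F //
        (Matrix.fromRows A (Matrix.of r)).rank < n} : ℝ) /
      (Fintype.card (Fin (n - m + ℓ) → Fin n → F) : ℝ)
      ≤ (Fintype.card F : ℝ) ^ (-(ℓ : ℤ)) :=
  stmt_7_general F m n ℓ A hA
end

section
/- The function k(x) = (1−x)^(x−1) / x^(2x) on (0,1) is increasing on (0, (−1+√(1+4e))/(2e)) and decreasing on ((−1+√(1+4e))/(2e), 1), and satisfies k(x) < 3 for all 0 < x < 1. -/
/-!
With `log k(x) = (x - 1) log(1 - x) - 2x log x`, one finds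
`(log k)'(x) = log(1 - x) - 2 log x - 1 = log ((1 - x) / (e x²))`, which is positive exactly when
`e x² + x < 1`, i.e. left of the positive root `c` of `e x² + x - 1`. So `k` peaks at `c`, where
`e c² = 1 - c` simplifies the maximum to `k(c) = eᶜ / (1 - c)`; since `c ≤ 0.45`, this is
below `e^0.45 / 0.55 < 3`.
-/

open Real Set

noncomputable def critPt : ℝ := (-1 + √(1 + 4 * exp 1)) / (2 * exp 1)

noncomputable def logK (x : ℝ) : ℝ := (x - 1) * log (1 - x) - 2 * x * log x

lemma exp_one_mul_critPt_sq_add_critPt : exp 1 * critPt ^ 2 + critPt = 1 := by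
  have hsq : √(1 + 4 * exp 1) ^ 2 = 1 + 4 * exp 1 := sq_sqrt (by positivity)
  unfold critPt
  set s := √(1 + 4 * exp 1)
  field_simp
  linear_combination hsq

lemma critPt_pos : 0 < critPt := by
  have hsqrt : 1 < √(1 + 4 * exp 1) := by
    rw [lt_sqrt zero_le_one]
    linarith [exp_pos 1]
  exact div_pos (by linarith) (by positivity)

lemma critPt_lt_one : critPt < 1 := by
  nlinarith [exp_one_mul_critPt_sq_add_critPt, mul_pos (exp_pos 1) (pow_pos critPt_pos 2)]

lemma strictMonoOn_exp_one_mul_sq_add : StrictMonoOn (fun y : ℝ => exp 1 * y ^ 2 + y) (Ici 0) :=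
  fun a ha b _ hab => by
    have : a ^ 2 ≤ b ^ 2 := pow_le_pow_left₀ ha hab.le 2
    simp only
    nlinarith [exp_pos 1]

lemma critPt_le : critPt ≤ 0.45 := by
  by_contra! h
  have hq := strictMonoOn_exp_one_mul_sq_add (by norm_num : (0 : ℝ) ≤ 0.45) critPt_pos.le h
  simp only [exp_one_mul_critPt_sq_add_critPt] at hq
  linarith [exp_one_gt_d9]

lemma rpow_div_rpow_eq_exp_logK {x : ℝ} (hx0 : 0 < x) (hx1 : x < 1) :
    (1 - x) ^ (x - 1) / x ^ (2 * x) = exp (logK x) := by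
  rw [rpow_def_of_pos (sub_pos.2 hx1), rpow_def_of_pos hx0, ← exp_sub, logK]
  ring_nf

lemma hasDerivAt_logK {x : ℝ} (hx0 : x ≠ 0) (hx1 : x ≠ 1) :
    HasDerivAt logK (log (1 - x) - 2 * log x - 1) x := by
  have h1x : 1 - x ≠ 0 := sub_ne_zero.2 hx1.symm
  have hlog : HasDerivAt (fun y => log (1 - y)) (-1 / (1 - x)) x := by
    simpa using ((hasDerivAt_id x).const_sub 1).log h1x
  have hmulLog : HasDerivAt (fun y => 2 * y * log y) (2 * (log x + 1)) x := by
    simpa [mul_assoc] using (hasDerivAt_mul_log hx0).const_mul 2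
  refine ((((hasDerivAt_id' x).sub_const 1).mul hlog).sub hmulLog).congr_deriv ?_
  field_simp
  ring

lemma continuousOn_logK : ContinuousOn logK (Ioo 0 1) := fun _ hx =>
  (hasDerivAt_logK hx.1.ne' hx.2.ne).continuousAt.continuousWithinAt

lemma log_one_sub_sub_two_mul_log_sub_one {x : ℝ} (hx0 : 0 < x) (hx1 : x < 1) :
    log (1 - x) - 2 * log x - 1 = log ((1 - x) / (exp 1 * x ^ 2)) := by
  rw [log_div (by linarith) (by positivity), log_mul (exp_pos 1).ne' (by positivity), log_exp,
    log_pow]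
  push_cast
  ring

lemma strictMonoOn_logK : StrictMonoOn logK (Ioc 0 critPt) := by
  refine strictMonoOn_of_hasDerivWithinAt_pos (f' := fun x => log (1 - x) - 2 * log x - 1)
    (convex_Ioc 0 critPt)
    (continuousOn_logK.mono fun x hx => ⟨hx.1, hx.2.trans_lt critPt_lt_one⟩)
    (fun x hx => ?_) (fun x hx => ?_)
  all_goals
    rw [interior_Ioc] at hx
    have hx1 : x < 1 := hx.2.trans critPt_lt_one
  · exact (hasDerivAt_logK hx.1.ne' hx1.ne).hasDerivWithinAt
  · have hq := strictMonoOn_exp_one_mul_sq_add hx.1.le critPt_pos.le hx.2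
    simp only [exp_one_mul_critPt_sq_add_critPt] at hq
    rw [log_one_sub_sub_two_mul_log_sub_one hx.1 hx1]
    exact log_pos ((one_lt_div (by positivity [hx.1])).2 (by linarith))

lemma strictAntiOn_logK : StrictAntiOn logK (Ico critPt 1) := by
  refine strictAntiOn_of_hasDerivWithinAt_neg (f' := fun x => log (1 - x) - 2 * log x - 1)
    (convex_Ico critPt 1)
    (continuousOn_logK.mono fun x hx => ⟨critPt_pos.trans_le hx.1, hx.2⟩)
    (fun x hx => ?_) (fun x hx => ?_)
  all_goals
    rw [interior_Ico] at hx
    have hx0 : 0 < x := critPt_pos.trans hx.1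
  · exact (hasDerivAt_logK hx0.ne' hx.2.ne).hasDerivWithinAt
  · have hq := strictMonoOn_exp_one_mul_sq_add critPt_pos.le hx0.le hx.1
    simp only [exp_one_mul_critPt_sq_add_critPt] at hq
    rw [log_one_sub_sub_two_mul_log_sub_one hx0 hx.2]
    exact log_neg (div_pos (sub_pos.2 hx.2) (by positivity))
      ((div_lt_one (by positivity)).2 (by linarith))

lemma logK_le_logK_critPt {x : ℝ} (hx : x ∈ Ioo 0 1) : logK x ≤ logK critPt := by
  rcases le_or_gt x critPt with h | h
  · exact strictMonoOn_logK.monotoneOn ⟨hx.1, h⟩ ⟨critPt_pos, le_rfl⟩ h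
  · exact strictAntiOn_logK.antitoneOn ⟨le_rfl, critPt_lt_one⟩ ⟨h.le, hx.2⟩ h.le

lemma exp_logK_critPt : exp (logK critPt) = exp critPt / (1 - critPt) := by
  have hroot : 1 - critPt = exp 1 * critPt ^ 2 := by
    linarith [exp_one_mul_critPt_sq_add_critPt]
  have hlog : log (1 - critPt) = 1 + 2 * log critPt := by
    rw [hroot, log_mul (exp_pos 1).ne' (by positivity [critPt_pos]), log_exp, log_pow]
    push_cast
    ring
  have hlogK : logK critPt = critPt - log (1 - critPt) := by
    rw [logK, hlog]
    ring
  rw [hlogK, exp_sub, exp_log (sub_pos.2 critPt_lt_one)]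

lemma exp_nine_twentieths_lt : exp 0.45 < 1.65 :=
  calc exp 0.45 = exp 0.1125 ^ 4 := by rw [← exp_nat_mul]; norm_num
    _ < (1 / (1 - 0.1125)) ^ 4 := by
        gcongr
        exact exp_bound_div_one_sub_of_interval' (by norm_num) (by norm_num)
    _ < 1.65 := by norm_num

lemma exp_logK_critPt_lt_three : exp (logK critPt) < 3 := by
  rw [exp_logK_critPt, div_lt_iff₀ (sub_pos.2 critPt_lt_one)]
  calc exp critPt ≤ exp 0.45 := exp_le_exp.2 critPt_le
    _ < 1.65 := exp_nine_twentieths_lt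
    _ ≤ 3 * (1 - critPt) := by linarith [critPt_le]

theorem stmt_12 :
    StrictMonoOn (fun x : ℝ => (1 - x) ^ (x - 1) / x ^ (2 * x))
      (Set.Ioo 0 ((-1 + Real.sqrt (1 + 4 * Real.exp 1)) / (2 * Real.exp 1))) ∧
    StrictAntiOn (fun x : ℝ => (1 - x) ^ (x - 1) / x ^ (2 * x))
      (Set.Ioo ((-1 + Real.sqrt (1 + 4 * Real.exp 1)) / (2 * Real.exp 1)) 1) ∧
    ∀ x ∈ Set.Ioo (0 : ℝ) 1, (1 - x) ^ (x - 1) / x ^ (2 * x) < 3 := by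
  change StrictMonoOn _ (Ioo 0 critPt) ∧ StrictAntiOn _ (Ioo critPt 1) ∧ _
  have hk : EqOn (exp ∘ logK) (fun x : ℝ => (1 - x) ^ (x - 1) / x ^ (2 * x)) (Ioo 0 1) :=
    fun x hx => (rpow_div_rpow_eq_exp_logK hx.1 hx.2).symm
  refine ⟨?_, ?_, fun x hx => ?_⟩
  · exact (exp_strictMono.comp_strictMonoOn (strictMonoOn_logK.mono Ioo_subset_Ioc_self)).congr
      (hk.mono (Ioo_subset_Ioo_right critPt_lt_one.le))
  · exact (exp_strictMono.comp_strictAntiOn (strictAntiOn_logK.mono Ioo_subset_Ico_self)).congr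
      (hk.mono (Ioo_subset_Ioo_left critPt_pos.le))
  · rw [rpow_div_rpow_eq_exp_logK hx.1 hx.2]
    exact (exp_le_exp.2 (logK_le_logK_critPt hx)).trans_lt exp_logK_critPt_lt_three
end

section
/- Suppose a, b are non-positive integers, d is a positive integer, γ = a/d, δ = b/d, q ≥ 2 is a real number, and c is a real number with c > 2q/(q−1) − δ/(q−1) − qγ/(q−1). Define f₁(β) = β^β − β^(β(γ−1))·((1/q)·β^(βδ) + ((q−1)/q)·β^(βc)) for 0 < β < 1. If 0 < Δ < Δ̂ ≤ 1/e, f₁(Δ) ≥ 0, and f₁(Δ̂) < 0, then f₁(β) ≥ 0 for all β with 0 < β ≤ Δ. -/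
/-!
Substituting `t = β ^ β` factors `f₁ β = t ^ (γ + δ - 1) * (g t - 1/q)` with
`g t = t ^ (2 - γ - δ) - (q - 1)/q * t ^ (c - δ)`, and `g 1 = 1/q`. The bound on `c` puts the
exponent of the subtracted term above the other one, which makes `g` increase and then decrease
on `(0, ∞)`; so on an interval `[t₀, 1]` it never drops below `min (g t₀) (g 1)`. Finally
`β ↦ β ^ β` is antitone on `(0, 1/e]` and at most `1` there, so `β ≤ Δ` places `β ^ β` in
`[Δ ^ Δ, 1]`.
-/

open Real Set

namespace Real

theorem rpow_self_antitoneOn : AntitoneOn (fun x : ℝ => x ^ x) (Ioc 0 (exp (-1))) := by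
  intro x hx y hy hxy
  simp only [rpow_def_of_pos hx.1, rpow_def_of_pos hy.1, exp_le_exp, mul_comm (log _)]
  exact mul_log_strictAntiOn.antitoneOn (Ioc_subset_Icc_self hx) (Ioc_subset_Icc_self hy) hxy

theorem hasDerivAt_rpow_sub_mul_rpow {A B K z : ℝ} (hz : 0 < z) :
    HasDerivAt (fun y : ℝ => y ^ A - K * y ^ B) (z ^ (A - 1) * (A - K * B * z ^ (B - A))) z := by
  refine ((hasDerivAt_rpow_const (p := A) (Or.inl hz.ne')).sub
    ((hasDerivAt_rpow_const (p := B) (Or.inl hz.ne')).const_mul K)).congr_deriv ?_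
  rw [show B - 1 = (A - 1) + (B - A) by ring, rpow_add hz]
  ring

/-- The derivative `y ^ (A - 1) * (A - K * B * y ^ (B - A))` changes sign at most once, from `+`
to `-`, so the function is unimodal. -/
theorem min_le_rpow_sub_mul_rpow {A B K w u v : ℝ} (hK : 0 ≤ K) (hB : 0 ≤ B) (hAB : A ≤ B)
    (hw : 0 < w) (hwu : w ≤ u) (huv : u ≤ v) :
    min (w ^ A - K * w ^ B) (v ^ A - K * v ^ B) ≤ u ^ A - K * u ^ B := by
  set g : ℝ → ℝ := fun y => y ^ A - K * y ^ B
  have hKB : 0 ≤ K * B := mul_nonneg hK hB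
  have hdiff : ∀ s ⊆ Ioi (0 : ℝ), DifferentiableOn ℝ g s := fun s hs z hz =>
    (hasDerivAt_rpow_sub_mul_rpow (hs hz)).differentiableAt.differentiableWithinAt
  rcases le_total (K * B * u ^ (B - A)) A with hu | hu
  · have hdiffIcc := hdiff (Icc w u) fun z hz => hw.trans_le hz.1
    have hmono : MonotoneOn g (Icc w u) := by
      refine monotoneOn_of_deriv_nonneg (convex_Icc w u) hdiffIcc.continuousOn
        (hdiffIcc.mono interior_subset) fun z hz => ?_
      rw [interior_Icc] at hz
      have hz0 : 0 < z := hw.trans hz.1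
      have : z ^ (B - A) ≤ u ^ (B - A) := rpow_le_rpow hz0.le hz.2.le (by linarith)
      rw [(hasDerivAt_rpow_sub_mul_rpow hz0).deriv]
      exact mul_nonneg (rpow_pos_of_pos hz0 _).le (by nlinarith)
    exact min_le_of_left_le (hmono (left_mem_Icc.2 hwu) (right_mem_Icc.2 hwu) hwu)
  · have hu0 : 0 < u := hw.trans_le hwu
    have hdiffIcc := hdiff (Icc u v) fun z hz => hu0.trans_le hz.1
    have hanti : AntitoneOn g (Icc u v) := by
      refine antitoneOn_of_deriv_nonpos (convex_Icc u v) hdiffIcc.continuousOn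
        (hdiffIcc.mono interior_subset) fun z hz => ?_
      rw [interior_Icc] at hz
      have hz0 : 0 < z := hu0.trans hz.1
      have : u ^ (B - A) ≤ z ^ (B - A) := rpow_le_rpow hu0.le hz.1.le (by linarith)
      rw [(hasDerivAt_rpow_sub_mul_rpow hz0).deriv]
      exact mul_nonpos_of_nonneg_of_nonpos (rpow_pos_of_pos hz0 _).le (by nlinarith)
    exact min_le_of_right_le (hanti (left_mem_Icc.2 huv) (right_mem_Icc.2 huv) huv)

theorem self_sub_rpow_mul_eq {t : ℝ} (ht : 0 < t) (γ δ c C K : ℝ) :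
    t - t ^ (γ - 1) * (C * t ^ δ + K * t ^ c) =
      t ^ (γ + δ - 1) * (t ^ (2 - γ - δ) - K * t ^ (c - δ) - C) := by
  have hA : t ^ (γ + δ - 1) * t ^ (2 - γ - δ) = t := by
    rw [← rpow_add ht, show γ + δ - 1 + (2 - γ - δ) = 1 by ring, rpow_one]
  have hB : t ^ (γ + δ - 1) * t ^ (c - δ) = t ^ (γ - 1) * t ^ c := by
    rw [← rpow_add ht, ← rpow_add ht]; ring_nf
  have hC : t ^ (γ + δ - 1) = t ^ (γ - 1) * t ^ δ := by
    rw [← rpow_add ht]; ring_nf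
  linear_combination K * hB + C * hC - hA

end Real

theorem two_sub_lt_of_div_lt {q c γ δ : ℝ} (hq : 1 < q) (hγδ : γ + δ ≤ 2)
    (hc : 2 * q / (q - 1) - δ / (q - 1) - q * γ / (q - 1) < c) : 2 - γ < c := by
  rw [show 2 * q / (q - 1) - δ / (q - 1) - q * γ / (q - 1) = (2 * q - δ - q * γ) / (q - 1) by
    ring, div_lt_iff₀ (by linarith)] at hc
  -- `hc` now reads `(c - (2 - γ)) * (q - 1) > 2 - γ - δ ≥ 0`
  nlinarith

theorem stmt_14_general (a b : ℤ) (d : ℕ) (ha : a ≤ 0) (hb : b ≤ 0)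
    (q c γ δ : ℝ) (hq : 2 ≤ q)
    (hγ : γ = (a : ℝ) / d) (hδ : δ = (b : ℝ) / d)
    (hc : c > 2 * q / (q - 1) - δ / (q - 1) - q * γ / (q - 1))
    (f₁ : ℝ → ℝ)
    (hf : ∀ β : ℝ, f₁ β =
      β ^ β - β ^ (β * (γ - 1)) *
        ((1 / q) * β ^ (β * δ) + ((q - 1) / q) * β ^ (β * c)))
    (Δ Δ' : ℝ) (h1 : 0 < Δ) (h2 : Δ < Δ') (h3 : Δ' ≤ 1 / Real.exp 1)
    (h4 : 0 ≤ f₁ Δ) :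
    ∀ β : ℝ, 0 < β → β ≤ Δ → 0 ≤ f₁ β := by
  intro β hβ hβΔ
  have hγ0 : γ ≤ 0 := hγ ▸ div_nonpos_of_nonpos_of_nonneg (by exact_mod_cast ha) d.cast_nonneg
  have hδ0 : δ ≤ 0 := hδ ▸ div_nonpos_of_nonpos_of_nonneg (by exact_mod_cast hb) d.cast_nonneg
  have hq1 : 0 < q - 1 := by linarith
  have hcγ : 2 - γ < c := two_sub_lt_of_div_lt (by linarith) (by linarith) hc
  have hsign : ∀ x, 0 < x →
      (0 ≤ f₁ x ↔ 1 / q ≤ (x ^ x) ^ (2 - γ - δ) - (q - 1) / q * (x ^ x) ^ (c - δ)) := by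
    intro x hx
    have hxx : 0 < x ^ x := rpow_pos_of_pos hx x
    rw [hf, rpow_mul hx.le, rpow_mul hx.le, rpow_mul hx.le, self_sub_rpow_mul_eq hxx,
      mul_nonneg_iff_of_pos_left (rpow_pos_of_pos hxx _), sub_nonneg]
  have hΔ : Δ ≤ exp (-1) := by
    rw [exp_neg, ← one_div]; exact h2.le.trans h3
  have hβ1 : β ≤ 1 := hβΔ.trans (hΔ.trans (exp_neg_one_lt_half.le.trans (by norm_num)))
  have hg1 : (1 : ℝ) ^ (2 - γ - δ) - (q - 1) / q * (1 : ℝ) ^ (c - δ) = 1 / q := by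
    rw [one_rpow, one_rpow]; field_simp; ring
  rw [hsign β hβ]
  calc 1 / q ≤ min ((Δ ^ Δ) ^ (2 - γ - δ) - (q - 1) / q * (Δ ^ Δ) ^ (c - δ))
        ((1 : ℝ) ^ (2 - γ - δ) - (q - 1) / q * (1 : ℝ) ^ (c - δ)) :=
      le_min ((hsign Δ h1).1 h4) hg1.ge
    _ ≤ _ := min_le_rpow_sub_mul_rpow (div_nonneg hq1.le (by linarith)) (by linarith) (by linarith)
      (rpow_pos_of_pos h1 Δ) (rpow_self_antitoneOn ⟨hβ, hβΔ.trans hΔ⟩ ⟨h1, hΔ⟩ hβΔ)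
      (rpow_le_one hβ.le hβ1 hβ.le)

theorem stmt_14 (a b : ℤ) (d : ℕ) (ha : a ≤ 0) (hb : b ≤ 0) (hd : 0 < d)
    (q c γ δ : ℝ) (hq : 2 ≤ q)
    (hγ : γ = (a : ℝ) / d) (hδ : δ = (b : ℝ) / d)
    (hc : c > 2 * q / (q - 1) - δ / (q - 1) - q * γ / (q - 1))
    (f₁ : ℝ → ℝ)
    (hf : ∀ β : ℝ, f₁ β =
      β ^ β - β ^ (β * (γ - 1)) *
        ((1 / q) * β ^ (β * δ) + ((q - 1) / q) * β ^ (β * c)))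
    (Δ Δ' : ℝ) (h1 : 0 < Δ) (h2 : Δ < Δ') (h3 : Δ' ≤ 1 / Real.exp 1)
    (h4 : 0 ≤ f₁ Δ) (h5 : f₁ Δ' < 0) :
    ∀ β : ℝ, 0 < β → β ≤ Δ → 0 ≤ f₁ β :=
  stmt_14_general a b d ha hb q c γ δ hq hγ hδ hc f₁ hf Δ Δ' h1 h2 h3 h4
end

section
/- For q = 2 and c₄ = 43/3: for all β with 0 < β ≤ 6/43, (1/(β^β·(1−β)^(1−β)))·(1/2 + (1/2)·(β/2)^(c₄β)) ≤ β^β. -/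
open Real Finset

set_option maxHeartbeats 2000000

/-- Upper bound for `log` via a lower Taylor bound of `exp`. -/
lemma logUB' {x r : ℝ} {n : ℕ} (hx : 0 < x) (hr : 0 ≤ r)
    (h : x ≤ ∑ m ∈ Finset.range n, r ^ m / m.factorial) : Real.log x ≤ r := by
  have h2 : x ≤ Real.exp r := h.trans (Real.sum_le_exp_of_nonneg hr n)
  exact (Real.log_le_iff_le_exp hx).2 h2

/-- Upper Taylor bound for `exp` on `[0,1]`. -/
lemma expUB' {x r : ℝ} (h0 : 0 ≤ x) (h1 : x ≤ 1)
    (h : (∑ m ∈ Finset.range 8, x ^ m / m.factorial) + x ^ 8 * (9 / (40320 * 8)) ≤ r) :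
    Real.exp x ≤ r := by
  have hb := Real.exp_bound (x := x) (by rw [abs_of_nonneg h0]; exact h1) (n := 8) (by norm_num)
  rw [abs_of_nonneg h0] at hb
  have h2 := (abs_le.1 hb).2
  norm_num [Nat.factorial] at h2 h
  linarith

/-- Upper bound for `exp (-y)` via a lower Taylor bound of `exp y`. -/
lemma expNegUB' {y s : ℝ} {n : ℕ} (hy : 0 ≤ y) (hs : 0 < s)
    (h : s ≤ ∑ m ∈ Finset.range n, y ^ m / m.factorial) : Real.exp (-y) ≤ 1 / s := by
  rw [Real.exp_neg, one_div]
  exact inv_anti₀ hs (h.trans (Real.sum_le_exp_of_nonneg hy n))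

/-- `u(β) = β (log 2 - log β)` is monotone on `(0, 6/43]`. -/
lemma u_mono' {a b : ℝ} (ha : 0 < a) (hab : a ≤ b) (hb : b ≤ 6 / 43) :
    a * (Real.log 2 - Real.log a) ≤ b * (Real.log 2 - Real.log b) := by
  have hb0 : 0 < b := lt_of_lt_of_le ha hab
  have h1 : Real.log b - Real.log a ≤ b / a - 1 := by
    rw [← Real.log_div hb0.ne' ha.ne']
    exact Real.log_le_sub_one_of_pos (div_pos hb0 ha)
  have h3 : a * (Real.log b - Real.log a) ≤ b - a := by
    have h2 := mul_le_mul_of_nonneg_left h1 ha.le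
    have h4 : a * (b / a - 1) = b - a := by field_simp
    rw [h4] at h2
    linarith
  have h2 : 1 ≤ Real.log 2 - Real.log b := by
    have he : Real.exp 1 ≤ 2 / b := by
      have h5 : Real.exp 1 < 2.7182818286 := Real.exp_one_lt_d9
      have h6 : (2.7182818286 : ℝ) ≤ 2 / b := by
        rw [le_div_iff₀ hb0]; nlinarith
      linarith
    have h7 := Real.log_le_log (Real.exp_pos 1) he
    rw [Real.log_exp, Real.log_div two_ne_zero hb0.ne'] at h7
    linarith
  have h4 : b - a ≤ (b - a) * (Real.log 2 - Real.log b) :=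
    le_mul_of_one_le_right (by linarith) h2
  nlinarith [h3, h4]

/-- `ψ(β) = (1-β) log (1-β)` is antitone on `[0, 6/43]`. -/
lemma psi_mono' {a b : ℝ} (ha : 0 ≤ a) (hab : a ≤ b) (hb : b ≤ 6 / 43) :
    (1 - b) * Real.log (1 - b) ≤ (1 - a) * Real.log (1 - a) := by
  set y := 1 - a with hy
  set z := 1 - b with hz
  have hz0 : 0 < z := by rw [hz]; linarith
  have hy0 : 0 < y := by rw [hy]; linarith
  have hzy : z ≤ y := by rw [hy, hz]; linarith
  have h1 : 1 - z / y ≤ Real.log y - Real.log z := by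
    have h := Real.one_sub_inv_le_log_of_pos (div_pos hy0 hz0)
    rw [inv_div, Real.log_div hy0.ne' hz0.ne'] at h
    exact h
  have h1' : y - z ≤ y * (Real.log y - Real.log z) := by
    have h := mul_le_mul_of_nonneg_left h1 hy0.le
    have h4 : y * (1 - z / y) = y - z := by field_simp
    rw [h4] at h
    linarith
  have h2 : -1 ≤ Real.log z := by
    have he : Real.exp (-1) ≤ z := by
      have h5 : (1 : ℝ) + 1 ≤ Real.exp 1 := by linarith [Real.add_one_le_exp (1 : ℝ)]
      have h6 : Real.exp (-1) ≤ 1 / 2 := by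
        rw [Real.exp_neg, inv_le_comm₀ (Real.exp_pos 1) (by norm_num)]
        linarith
      have h7 : (1 : ℝ) / 2 ≤ z := by rw [hz]; linarith
      linarith
    have h8 := Real.log_le_log (Real.exp_pos (-1)) he
    rwa [Real.log_exp] at h8
  have h3 : (y - z) * (-1) ≤ (y - z) * Real.log z :=
    mul_le_mul_of_nonneg_left h2 (by linarith)
  nlinarith [h1', h3]

/-- Reduction by convexity of `exp` to the endpoint of the interval. -/
lemma step' {u U c : ℝ} (hu0 : 0 ≤ u) (huU : u ≤ U) (hU : 0 < U) (hc0 : 0 ≤ c)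
    (hT : Real.exp (2 * U) + Real.exp (-(37 / 3) * U) ≤ 2 * Real.exp c) :
    Real.exp (2 * u) + Real.exp (-(37 / 3) * u) ≤ 2 * Real.exp c := by
  set t := u / U with ht
  have ht0 : 0 ≤ t := div_nonneg hu0 hU.le
  have ht1 : t ≤ 1 := (div_le_one hU).2 huU
  have key : ∀ v : ℝ, Real.exp (t * v) ≤ (1 - t) + t * Real.exp v := by
    intro v
    have hc := convexOn_exp.2 (Set.mem_univ (0 : ℝ)) (Set.mem_univ v)
      (by linarith : (0 : ℝ) ≤ 1 - t) ht0 (by ring)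
    simpa [smul_eq_mul, Real.exp_zero] using hc
  have htu : t * U = u := by rw [ht]; field_simp
  have e1 : Real.exp (2 * u) ≤ (1 - t) + t * Real.exp (2 * U) := by
    have h := key (2 * U)
    rw [show t * (2 * U) = 2 * u by rw [mul_left_comm, htu]] at h
    exact h
  have e2 : Real.exp (-(37 / 3) * u) ≤ (1 - t) + t * Real.exp (-(37 / 3) * U) := by
    have h := key (-(37 / 3) * U)
    rw [show t * (-(37 / 3) * U) = -(37 / 3) * u by rw [mul_left_comm, htu]] at h
    exact h
  have h2c : (2 : ℝ) ≤ 2 * Real.exp c := by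
    have := Real.one_le_exp hc0
    linarith
  have h5 : t * (Real.exp (2 * U) + Real.exp (-(37 / 3) * U)) ≤ t * (2 * Real.exp c) :=
    mul_le_mul_of_nonneg_left hT ht0
  have h6 : 2 * (1 - t) ≤ (2 * Real.exp c) * (1 - t) :=
    mul_le_mul_of_nonneg_right h2c (by linarith)
  nlinarith [e1, e2, h5, h6]

lemma sq_le_exp' {c : ℝ} (hc : 0 ≤ c) : 2 * (1 + c / 2) ^ 2 ≤ 2 * Real.exp c := by
  have h := Real.add_one_le_exp (c / 2)
  have h0 : (0 : ℝ) ≤ 1 + c / 2 := by linarith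
  have h1 : (1 + c / 2) ^ 2 ≤ Real.exp (c / 2) * Real.exp (c / 2) := by nlinarith
  rw [← Real.exp_add] at h1
  have h2 : c / 2 + c / 2 = c := by ring
  rw [h2] at h1
  linarith

/-- The key inequality: `exp (2u) + exp (-(37/3) u) ≤ 2 exp c` where
`u = β (log 2 - log β)` and `c = 2 β log 2 + (1-β) log (1-β)`. -/
lemma main_ineq' (β : ℝ) (hβ : 0 < β) (hβ' : β ≤ 6 / 43) :
    Real.exp (2 * (β * (Real.log 2 - Real.log β))) +
      Real.exp (-(37 / 3) * (β * (Real.log 2 - Real.log β))) ≤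
    2 * Real.exp (2 * β * Real.log 2 + (1 - β) * Real.log (1 - β)) := by
  set u := β * (Real.log 2 - Real.log β) with hu
  set c := 2 * β * Real.log 2 + (1 - β) * Real.log (1 - β) with hc
  have hu0 : 0 ≤ u := by
    apply mul_nonneg hβ.le
    have : Real.log β ≤ Real.log 2 := Real.log_le_log hβ (by linarith)
    linarith
  have h1β : 0 < 1 - β := by linarith
  have hψβ : -β ≤ (1 - β) * Real.log (1 - β) := by
    have h := Real.one_sub_inv_le_log_of_pos h1β
    have h2 := mul_le_mul_of_nonneg_left h h1β.le
    have h3 : (1 - β) * (1 - (1 - β)⁻¹) = -β := by field_simp; ring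
    rw [h3] at h2
    linarith
  have hlog2 : (0.6931471803 : ℝ) < Real.log 2 := Real.log_two_gt_d9
  have hlog2' : Real.log 2 < 0.6931471808 := Real.log_two_lt_d9
  have hc0 : 0 ≤ c := by nlinarith [mul_nonneg hβ.le (by linarith : (0 : ℝ) ≤ Real.log 2 - 0.6931471803)]
  -- helper: numeric upper bound for u at a rational right endpoint
  -- region case analysis
  rcases le_or_gt β 0.12 with hr1 | hr1
  · -- Region 1 : β ≤ 0.12, U = 0.3377, target 2
    have hlb : Real.log (1 / 0.12 : ℝ) ≤ 2.1204 := by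
      apply logUB' (n := 10) (by norm_num) (by norm_num)
      norm_num [Finset.sum_range_succ, Nat.factorial]
    rw [one_div, Real.log_inv] at hlb
    have huU : u ≤ 0.3377 := by
      have h1 := u_mono' hβ hr1 (by norm_num)
      nlinarith [h1]
    apply step' hu0 huU (by norm_num) hc0
    have hE2 : Real.exp (2 * (0.3377 : ℝ)) ≤ 1.96482 := by
      apply expUB' (by norm_num) (by norm_num)
      norm_num [Finset.sum_range_succ, Nat.factorial]
    have hE3 : Real.exp (-(37 / 3) * (0.3377 : ℝ)) ≤ 1 / 64.38 := by
      rw [show (-(37 / 3) * (0.3377 : ℝ)) = -(124949 / 30000 : ℝ) by norm_num]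
      apply expNegUB' (n := 14) (by norm_num) (by norm_num)
      norm_num [Finset.sum_range_succ, Nat.factorial]
    have h2c : (2 : ℝ) ≤ 2 * Real.exp c := by
      have := Real.one_le_exp hc0
      linarith
    have : Real.exp (2 * (0.3377 : ℝ)) + Real.exp (-(37 / 3) * (0.3377 : ℝ)) ≤ 2 := by
      have : (1.96482 : ℝ) + 1 / 64.38 ≤ 2 := by norm_num
      linarith
    linarith
  rcases le_or_gt β 0.13 with hr2 | hr2
  · -- Region 2 : 0.12 ≤ β ≤ 0.13, U = 0.35535
    have hlb : Real.log (1 / 0.13 : ℝ) ≤ 2.0403 := by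
      apply logUB' (n := 10) (by norm_num) (by norm_num)
      norm_num [Finset.sum_range_succ, Nat.factorial]
    rw [one_div, Real.log_inv] at hlb
    have huU : u ≤ 0.35535 := by
      have h1 := u_mono' hβ hr2 (by norm_num)
      nlinarith [h1]
    have hψb : -(0.87 * 0.13927 : ℝ) ≤ (1 - β) * Real.log (1 - β) := by
      have hψm := psi_mono' hβ.le hr2 (by norm_num)
      have hlb2 : Real.log (1 / (1 - 0.13) : ℝ) ≤ 0.13927 := by
        apply logUB' (n := 5) (by norm_num) (by norm_num)
        norm_num [Finset.sum_range_succ, Nat.factorial]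
      rw [one_div, Real.log_inv] at hlb2
      nlinarith [hψm]
    have hcc : (0.0451904 : ℝ) ≤ c := by
      have hb2 : 2 * (0.12 : ℝ) * 0.6931471803 ≤ 2 * β * Real.log 2 := by nlinarith
      rw [hc]; nlinarith [hψb]
    apply step' hu0 huU (by norm_num) hc0
    have hE2 : Real.exp (2 * (0.35535 : ℝ)) ≤ 2.03542 := by
      apply expUB' (by norm_num) (by norm_num)
      norm_num [Finset.sum_range_succ, Nat.factorial]
    have hE3 : Real.exp (-(37 / 3) * (0.35535 : ℝ)) ≤ 1 / 80.03 := by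
      rw [show (-(37 / 3) * (0.35535 : ℝ)) = -(87653 / 20000 : ℝ) by norm_num]
      apply expNegUB' (n := 14) (by norm_num) (by norm_num)
      norm_num [Finset.sum_range_succ, Nat.factorial]
    have hsq : 2 * (1 + (0.0451904 : ℝ) / 2) ^ 2 ≤ 2 * Real.exp 0.0451904 := sq_le_exp' (by norm_num)
    have hmono : Real.exp (0.0451904 : ℝ) ≤ Real.exp c := Real.exp_le_exp.2 hcc
    have hnum : (2.03542 : ℝ) + 1 / 80.03 ≤ 2 * (1 + (0.0451904 : ℝ) / 2) ^ 2 := by norm_num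
    linarith
  rcases le_or_gt β 0.136 with hr3 | hr3
  · -- Region 3 : 0.13 ≤ β ≤ 0.136, U = 0.36562
    have hlb : Real.log (1 / 0.136 : ℝ) ≤ 1.9952 := by
      apply logUB' (n := 10) (by norm_num) (by norm_num)
      norm_num [Finset.sum_range_succ, Nat.factorial]
    rw [one_div, Real.log_inv] at hlb
    have huU : u ≤ 0.36562 := by
      have h1 := u_mono' hβ hr3 (by norm_num)
      nlinarith [h1]
    have hψb : -(0.864 * 0.14623 : ℝ) ≤ (1 - β) * Real.log (1 - β) := by
      have hψm := psi_mono' hβ.le hr3 (by norm_num)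
      have hlb2 : Real.log (1 / (1 - 0.136) : ℝ) ≤ 0.14623 := by
        apply logUB' (n := 5) (by norm_num) (by norm_num)
        norm_num [Finset.sum_range_succ, Nat.factorial]
      rw [one_div, Real.log_inv] at hlb2
      nlinarith [hψm]
    have hcc : (0.0538755 : ℝ) ≤ c := by
      have hb2 : 2 * (0.13 : ℝ) * 0.6931471803 ≤ 2 * β * Real.log 2 := by nlinarith
      rw [hc]; nlinarith [hψb]
    apply step' hu0 huU (by norm_num) hc0
    have hE2 : Real.exp (2 * (0.36562 : ℝ)) ≤ 2.07766 := by
      apply expUB' (by norm_num) (by norm_num)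
      norm_num [Finset.sum_range_succ, Nat.factorial]
    have hE3 : Real.exp (-(37 / 3) * (0.36562 : ℝ)) ≤ 1 / 90.83 := by
      rw [show (-(37 / 3) * (0.36562 : ℝ)) = -(676397 / 150000 : ℝ) by norm_num]
      apply expNegUB' (n := 14) (by norm_num) (by norm_num)
      norm_num [Finset.sum_range_succ, Nat.factorial]
    have hsq : 2 * (1 + (0.0538755 : ℝ) / 2) ^ 2 ≤ 2 * Real.exp 0.0538755 := sq_le_exp' (by norm_num)
    have hmono : Real.exp (0.0538755 : ℝ) ≤ Real.exp c := Real.exp_le_exp.2 hcc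
    have hnum : (2.07766 : ℝ) + 1 / 90.83 ≤ 2 * (1 + (0.0538755 : ℝ) / 2) ^ 2 := by norm_num
    linarith
  · -- Region 4 : 0.136 ≤ β ≤ 6/43, U = 0.37155
    have hlb : Real.log (1 / (6 / 43) : ℝ) ≤ 1.9696 := by
      apply logUB' (n := 10) (by norm_num) (by norm_num)
      norm_num [Finset.sum_range_succ, Nat.factorial]
    rw [one_div, Real.log_inv] at hlb
    have huU : u ≤ 0.37155 := by
      have h1 := u_mono' hβ hβ' (by norm_num)
      nlinarith [h1]
    have hψb : -((37 / 43) * 0.15033 : ℝ) ≤ (1 - β) * Real.log (1 - β) := by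
      have hψm := psi_mono' hβ.le hβ' (by norm_num)
      have hlb2 : Real.log (1 / (1 - 6 / 43) : ℝ) ≤ 0.15033 := by
        apply logUB' (n := 5) (by norm_num) (by norm_num)
        norm_num [Finset.sum_range_succ, Nat.factorial]
      rw [one_div, Real.log_inv] at hlb2
      nlinarith [hψm]
    have hcc : (0.0591823 : ℝ) ≤ c := by
      have hb2 : 2 * (0.136 : ℝ) * 0.6931471803 ≤ 2 * β * Real.log 2 := by nlinarith
      rw [hc]; nlinarith [hψb]
    apply step' hu0 huU (by norm_num) hc0
    have hE2 : Real.exp (2 * (0.37155 : ℝ)) ≤ 2.10245 := by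
      apply expUB' (by norm_num) (by norm_num)
      norm_num [Finset.sum_range_succ, Nat.factorial]
    have hE3 : Real.exp (-(37 / 3) * (0.37155 : ℝ)) ≤ 1 / 97.72 := by
      rw [show (-(37 / 3) * (0.37155 : ℝ)) = -(91649 / 20000 : ℝ) by norm_num]
      apply expNegUB' (n := 14) (by norm_num) (by norm_num)
      norm_num [Finset.sum_range_succ, Nat.factorial]
    have hsq : 2 * (1 + (0.0591823 : ℝ) / 2) ^ 2 ≤ 2 * Real.exp 0.0591823 := sq_le_exp' (by norm_num)
    have hmono : Real.exp (0.0591823 : ℝ) ≤ Real.exp c := Real.exp_le_exp.2 hcc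
    have hnum : (2.10245 : ℝ) + 1 / 97.72 ≤ 2 * (1 + (0.0591823 : ℝ) / 2) ^ 2 := by norm_num
    linarith

theorem stmt_16 (β : ℝ) (hβ : 0 < β) (hβ' : β ≤ 6 / 43) :
    (1 / (β ^ β * (1 - β) ^ (1 - β))) *
      (1 / 2 + (1 / 2) * (β / 2) ^ ((43 / 3 : ℝ) * β)) ≤ β ^ β := by
  have h2β : 0 < β / 2 := by linarith
  have h1β : 0 < 1 - β := by linarith
  rw [Real.rpow_def_of_pos hβ, Real.rpow_def_of_pos h2β, Real.rpow_def_of_pos h1β]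
  have hld : Real.log (β / 2) = Real.log β - Real.log 2 := Real.log_div hβ.ne' two_ne_zero
  rw [hld]
  set x := Real.log β with hx
  set l := Real.log 2 with hl
  set m := Real.log (1 - β) with hm
  have key := main_ineq' β hβ hβ'
  rw [← hx, ← hl, ← hm] at key
  set u := β * (l - x) with hu
  -- key : exp (2u) + exp (-(37/3) u) ≤ 2 exp (2 β l + (1-β) m)
  have main2 : 1 + Real.exp ((x - l) * (43 / 3 * β)) ≤
      2 * (Real.exp (x * β) * Real.exp (x * β) * Real.exp (m * (1 - β))) := by
    have hpos : 0 < Real.exp (2 * u) := Real.exp_pos _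
    have hid1 : Real.exp (2 * u) * (1 + Real.exp ((x - l) * (43 / 3 * β))) =
        Real.exp (2 * u) + Real.exp (-(37 / 3) * u) := by
      rw [mul_add, mul_one, ← Real.exp_add]
      congr 2
      rw [hu]; ring
    have hid2 : Real.exp (2 * u) *
        (2 * (Real.exp (x * β) * Real.exp (x * β) * Real.exp (m * (1 - β)))) =
        2 * Real.exp (2 * β * l + (1 - β) * m) := by
      rw [show Real.exp (2 * u) * (2 * (Real.exp (x * β) * Real.exp (x * β) *
          Real.exp (m * (1 - β)))) = 2 * (Real.exp (2 * u) * Real.exp (x * β) *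
          Real.exp (x * β) * Real.exp (m * (1 - β))) by ring]
      rw [← Real.exp_add, ← Real.exp_add, ← Real.exp_add]
      congr 2
      rw [hu]; ring
    have h := key
    rw [← hid1] at h
    rw [← hid2] at h
    exact le_of_mul_le_mul_left h hpos
  have hA : 0 < Real.exp (x * β) := Real.exp_pos _
  have hB : 0 < Real.exp (m * (1 - β)) := Real.exp_pos _
  rw [div_mul_eq_mul_div, div_le_iff₀ (by positivity)]
  nlinarith [main2]
end

section
/- For q = 3 and c₄ = 8: for all β with 0 < β ≤ 1/4, (2^β/(β^β·(1−β)^(1−β)))·(1/3 + (2/3)·(β/3)^(8β)) ≤ β^β. -/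
/-!
After clearing the denominator the claim reads `lhs β ≤ rhs β`, with
`lhs β = 2^β (1/3 + 2/3 (β/3)^(8β))` and `rhs β = β^(2β) (1-β)^(1-β)`.

For `β ≤ 1/32` write `t = 8β log(β/3) ≤ 0`; then `exp t ≤ 1 + t + t²/2` and
`(1-β) log(1-β) ≥ -β` reduce the claim to `β log(3/β) ≤ 5/32`.

On `[1/32, 1/4]` every factor is monotone, because `x ↦ x log x` decreases on `[0, 1/e]` and
increases on `[1/e, ∞)`. Hence on `[a, b]` it suffices that `2^b (1/3 + 2/3 (a/3)^(8a)) ≤ rhs b`,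
and for `a, b ∈ ℕ/N` this becomes an inequality between integers after raising it to the
`N`-th power; four subintervals with `N = 96` suffice, checked by `decide`.
-/

open Real Set

lemma rpow_mul_self_eq_exp (c : ℝ) {x : ℝ} (hx : 0 ≤ x) : x ^ (c * x) = exp (c * (x * log x)) := by
  rcases hx.eq_or_lt with rfl | hx
  · simp
  · rw [rpow_def_of_pos hx]; ring_nf

lemma antitoneOn_rpow_mul_self {c : ℝ} (hc : 0 ≤ c) :
    AntitoneOn (fun x : ℝ ↦ x ^ (c * x)) (Icc 0 (exp (-1))) := by
  intro x hx y hy hxy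
  simp only [rpow_mul_self_eq_exp c hx.1, rpow_mul_self_eq_exp c hy.1, exp_le_exp]
  exact mul_le_mul_of_nonneg_left (mul_log_strictAntiOn.antitoneOn hx hy hxy) hc

lemma monotoneOn_rpow_mul_self {c : ℝ} (hc : 0 ≤ c) :
    MonotoneOn (fun x : ℝ ↦ x ^ (c * x)) (Ici (exp (-1))) := by
  intro x hx y hy hxy
  have hx0 : 0 ≤ x := (exp_pos _).le.trans hx
  simp only [rpow_mul_self_eq_exp c hx0, rpow_mul_self_eq_exp c (hx0.trans hxy), exp_le_exp]
  exact mul_le_mul_of_nonneg_left (mul_log_strictMonoOn.monotoneOn hx hy hxy) hc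

lemma exp_le_one_add_add_sq_div_two {t : ℝ} (ht : t ≤ 0) : exp t ≤ 1 + t + t ^ 2 / 2 := by
  have hs : 0 ≤ -t := neg_nonneg.2 ht
  have hP : 1 + -t + (-t) ^ 2 / 2 + (-t) ^ 3 / 6 ≤ exp (-t) := by
    simpa [Finset.sum_range_succ, Nat.factorial] using sum_le_exp_of_nonneg hs 4
  have hPQ : 1 ≤ (1 + -t + (-t) ^ 2 / 2 + (-t) ^ 3 / 6) * (1 + t + t ^ 2 / 2) := by
    have h : (1 + -t + (-t) ^ 2 / 2 + (-t) ^ 3 / 6) * (1 + t + t ^ 2 / 2)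
        = 1 + ((-t) ^ 3 / 6 + (-t) ^ 4 / 12 + (-t) ^ 5 / 12) := by ring
    rw [h]; linarith [pow_nonneg hs 3, pow_nonneg hs 4, pow_nonneg hs 5]
  have hQ : 0 ≤ 1 + t + t ^ 2 / 2 := by nlinarith [sq_nonneg (t + 1)]
  calc exp t ≤ exp t * ((1 + -t + (-t) ^ 2 / 2 + (-t) ^ 3 / 6) * (1 + t + t ^ 2 / 2)) :=
        le_mul_of_one_le_right (exp_pos t).le hPQ
    _ ≤ exp t * exp (-t) * (1 + t + t ^ 2 / 2) := by rw [← mul_assoc]; gcongr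
    _ = 1 + t + t ^ 2 / 2 := by rw [← exp_add, add_neg_cancel, exp_zero, one_mul]

lemma quarter_le_exp_neg_one : 1 / 4 ≤ exp (-1) := by
  have := exp_neg_one_gt_d9; linarith

lemma exp_neg_one_le_three_quarters : exp (-1) ≤ 3 / 4 := by
  have := exp_neg_one_lt_d9; linarith

lemma one_third_add_two_thirds_exp_le {t : ℝ} (ht : t ≤ 0) :
    1 / 3 + 2 / 3 * exp t ≤ exp (2 / 3 * t + t ^ 2 / 3) := by
  have h := exp_le_one_add_add_sq_div_two ht
  have := add_one_le_exp (2 / 3 * t + t ^ 2 / 3)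
  linarith

lemma rpow_natCast_div_pow {x : ℝ} (hx : 0 ≤ x) (k : ℕ) {N : ℕ} (hN : N ≠ 0) :
    (x ^ ((k : ℝ) / N)) ^ N = x ^ k := by
  rw [← rpow_mul_natCast hx, div_mul_cancel₀ _ (Nat.cast_ne_zero.2 hN), rpow_natCast]

namespace BetaBound

noncomputable def lhs (β : ℝ) : ℝ := 2 ^ β * (1 / 3 + 2 / 3 * (β / 3) ^ (8 * β))

noncomputable def rhs (β : ℝ) : ℝ := β ^ (2 * β) * (1 - β) ^ (1 - β)

lemma lhs_le_of_mem_Icc {a b β : ℝ} (ha : 0 ≤ a) (hb : b ≤ 1 / 4) (hβ : β ∈ Icc a b) :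
    lhs β ≤ 2 ^ b * (1 / 3 + 2 / 3 * (a / 3) ^ (8 * a)) := by
  have hthird {x : ℝ} : (x / 3) ^ (8 * x) = (x / 3) ^ (24 * (x / 3)) := by ring_nf
  have hmem {x : ℝ} (hx0 : 0 ≤ x) (hxb : x ≤ b) : x / 3 ∈ Icc 0 (exp (-1)) :=
    ⟨by positivity, by linarith [quarter_le_exp_neg_one]⟩
  have hpow : (β / 3) ^ (8 * β) ≤ (a / 3) ^ (8 * a) := by
    rw [hthird, hthird]
    exact antitoneOn_rpow_mul_self (by norm_num) (hmem ha (hβ.1.trans hβ.2))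
      (hmem (ha.trans hβ.1) hβ.2) (by linarith [hβ.1])
  have hβpow : 0 ≤ (β / 3) ^ (8 * β) := rpow_nonneg (by linarith [hβ.1]) _
  exact mul_le_mul (rpow_le_rpow_of_exponent_le one_le_two hβ.2) (by linarith)
    (by positivity) (by positivity)

lemma rhs_le_of_le {β b : ℝ} (hβ : 0 ≤ β) (hβb : β ≤ b) (hb : b ≤ 1 / 4) : rhs b ≤ rhs β := by
  have hq := quarter_le_exp_neg_one
  have h1 : b ^ (2 * b) ≤ β ^ (2 * β) :=
    antitoneOn_rpow_mul_self zero_le_two ⟨hβ, by linarith⟩ ⟨hβ.trans hβb, by linarith⟩ hβb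
  have hq' := exp_neg_one_le_three_quarters
  have h2 : (1 - b) ^ (1 * (1 - b)) ≤ (1 - β) ^ (1 * (1 - β)) :=
    monotoneOn_rpow_mul_self zero_le_one (show exp (-1) ≤ 1 - b by linarith)
      (show exp (-1) ≤ 1 - β by linarith) (by linarith)
  rw [one_mul, one_mul] at h2
  exact mul_le_mul h1 h2 (rpow_nonneg (by linarith) _) (rpow_nonneg hβ _)

lemma lhs_le_rhs_of_mem_Icc {a b r β : ℝ} (ha : 0 ≤ a) (hb : b ≤ 1 / 4)
    (hr : (a / 3) ^ (8 * a) ≤ r) (hbr : 2 ^ b * (1 / 3 + 2 / 3 * r) ≤ rhs b) (hβ : β ∈ Icc a b) :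
    lhs β ≤ rhs β :=
  calc lhs β ≤ 2 ^ b * (1 / 3 + 2 / 3 * (a / 3) ^ (8 * a)) := lhs_le_of_mem_Icc ha hb hβ
    _ ≤ 2 ^ b * (1 / 3 + 2 / 3 * r) := by gcongr
    _ ≤ rhs b := hbr
    _ ≤ rhs β := rhs_le_of_le (ha.trans hβ.1) hβ.2 hb

/-- `(a/3)^(8a) ≤ R/D` and `2^b (1/3 + 2/3 R/D) ≤ rhs b` for `a = i/N`, `b = j/N`, raised to the
`N`-th power and cleared of denominators, together with `b ≤ 1/4`. -/
def intervalCertified (N D i j R : ℕ) : Bool :=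
  i ^ (8 * i) * D ^ N ≤ R ^ N * (3 * N) ^ (8 * i) &&
    2 ^ j * (D + 2 * R) ^ N * N ^ (N + j) ≤ j ^ (2 * j) * (N - j) ^ (N - j) * (3 * D) ^ N &&
    4 * j ≤ N

def chainCertified (N D e : ℕ) : ℕ → List (ℕ × ℕ) → Bool
  | i, [] => e ≤ i
  | i, (j, R) :: l => intervalCertified N D i j R && chainCertified N D e j l

lemma base_rpow_le_of_certified {N D i R : ℕ} (hN : 0 < N) (hD : 0 < D)
    (h : i ^ (8 * i) * D ^ N ≤ R ^ N * (3 * N) ^ (8 * i)) :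
    ((i : ℝ) / N / 3) ^ (8 * ((i : ℝ) / N)) ≤ R / D := by
  have hexp : 8 * ((i : ℝ) / N) = ((8 * i : ℕ) : ℝ) / N := by push_cast; ring
  rw [hexp, ← pow_le_pow_iff_left₀ (by positivity) (by positivity) hN.ne',
    rpow_natCast_div_pow (by positivity) _ hN.ne', show (i : ℝ) / N / 3 = i / (3 * N) by ring,
    div_pow, div_pow, div_le_div_iff₀ (by positivity) (by positivity)]
  exact_mod_cast h

lemma le_rhs_of_certified {N D j R : ℕ} (hN : 0 < N) (hD : 0 < D) (hjN : j ≤ N)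
    (h : 2 ^ j * (D + 2 * R) ^ N * N ^ (N + j) ≤ j ^ (2 * j) * (N - j) ^ (N - j) * (3 * D) ^ N) :
    2 ^ ((j : ℝ) / N) * (1 / 3 + 2 / 3 * ((R : ℝ) / D)) ≤ rhs (j / N) := by
  have h2j : 2 * ((j : ℝ) / N) = ((2 * j : ℕ) : ℝ) / N := by push_cast; ring
  have hNj : 1 - (j : ℝ) / N = ((N - j : ℕ) : ℝ) / N := by
    rw [Nat.cast_sub hjN]; field_simp
  have hNj0 : (0 : ℝ) ≤ ((N - j : ℕ) : ℝ) / N := by positivity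
  unfold rhs
  rw [h2j, hNj, ← pow_le_pow_iff_left₀ (by positivity) (by positivity) hN.ne', mul_pow, mul_pow,
    rpow_natCast_div_pow zero_le_two _ hN.ne', rpow_natCast_div_pow (by positivity) _ hN.ne',
    rpow_natCast_div_pow hNj0 _ hN.ne']
  have hl : (2 : ℝ) ^ j * (1 / 3 + 2 / 3 * ((R : ℝ) / D)) ^ N
      = 2 ^ j * (D + 2 * R) ^ N / (3 * D) ^ N := by
    rw [show 1 / 3 + 2 / 3 * ((R : ℝ) / D) = (D + 2 * R) / (3 * D) by field_simp, div_pow]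
    ring
  have hr : ((j : ℝ) / N) ^ (2 * j) * (((N - j : ℕ) : ℝ) / N) ^ (N - j)
      = j ^ (2 * j) * ((N - j : ℕ) : ℝ) ^ (N - j) / (N : ℝ) ^ (N + j) := by
    rw [div_pow, div_pow, show N + j = 2 * j + (N - j) by omega, pow_add]
    ring
  rw [hl, hr, div_le_div_iff₀ (by positivity) (by positivity)]
  exact_mod_cast h

lemma lhs_le_rhs_of_intervalCertified {N D i j R : ℕ} (hN : 0 < N) (hD : 0 < D)
    (h : intervalCertified N D i j R = true) {β : ℝ} (hβ : β ∈ Icc ((i : ℝ) / N) (j / N)) :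
    lhs β ≤ rhs β := by
  simp only [intervalCertified, Bool.and_eq_true, decide_eq_true_eq] at h
  obtain ⟨⟨hbase, hend⟩, hquarter⟩ := h
  have hjN : (j : ℝ) / N ≤ 1 / 4 := by
    rw [div_le_iff₀ (by positivity)]
    have : (4 * j : ℝ) ≤ N := by exact_mod_cast hquarter
    linarith
  exact lhs_le_rhs_of_mem_Icc (by positivity) hjN (base_rpow_le_of_certified hN hD hbase)
    (le_rhs_of_certified hN hD (by omega) hend) hβ

lemma lhs_le_rhs_of_chainCertified {N D e : ℕ} (hN : 0 < N) (hD : 0 < D) {i : ℕ}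
    {l : List (ℕ × ℕ)} (h : chainCertified N D e i l = true) {β : ℝ}
    (hiβ : (i : ℝ) / N < β) (hβe : β ≤ e / N) : lhs β ≤ rhs β := by
  induction l generalizing i with
  | nil =>
    have hei : (e : ℝ) ≤ i := by exact_mod_cast (by simpa [chainCertified] using h : e ≤ i)
    have : (e : ℝ) / N ≤ i / N := by gcongr
    linarith
  | cons c l ih =>
    obtain ⟨j, R⟩ := c
    simp only [chainCertified, Bool.and_eq_true] at h
    rcases le_or_gt β (j / N) with hβj | hjβ
    · exact lhs_le_rhs_of_intervalCertified hN hD h.1 ⟨hiβ.le, hβj⟩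
    · exact ih h.2 hjβ

lemma log_two_add_one_le_two_mul_log_three : log 2 + 1 ≤ 2 * log 3 := by
  have h : 1 ≤ log (9 / 2) := by
    rw [le_log_iff_exp_le (by norm_num)]
    linarith [exp_one_lt_d9]
  rw [log_div (by norm_num) (by norm_num), show (9 : ℝ) = 3 ^ 2 by norm_num, log_pow] at h
  push_cast at h
  linarith

lemma neg_mul_log_div_three_le {β : ℝ} (hβ : 0 < β) (h : β ≤ 1 / 32) :
    -(β * log (β / 3)) ≤ 5 / 32 := by
  have hq := quarter_le_exp_neg_one
  have hanti : 1 / 96 * log (1 / 96) ≤ β / 3 * log (β / 3) :=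
    mul_log_strictAntiOn.antitoneOn ⟨by positivity, by linarith⟩ ⟨by norm_num, by linarith⟩
      (by linarith)
  have hlog96 : log 96 ≤ 5 := by
    rw [log_le_iff_le_exp (by norm_num)]
    calc (96 : ℝ) ≤ 2.7 ^ 5 := by norm_num
      _ ≤ exp 1 ^ 5 := by gcongr; linarith [exp_one_gt_d9]
      _ = exp 5 := by rw [exp_one_pow]; norm_num
  rw [one_div, log_inv] at hanti
  linarith

lemma lhs_le_rhs_near_zero {β : ℝ} (hβ : 0 < β) (h : β ≤ 1 / 32) : lhs β ≤ rhs β := by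
  have hβ1 : 0 < 1 - β := by linarith
  set m := -(β * log (β / 3)) with hm_def
  have hm0 : 0 ≤ m :=
    neg_nonneg.2 (mul_nonpos_of_nonneg_of_nonpos hβ.le (log_nonpos (by positivity) (by linarith)))
  have hm := neg_mul_log_div_three_le hβ h
  set t := log (β / 3) * (8 * β) with ht_def
  have ht : t = -8 * m := by rw [ht_def, hm_def]; ring
  have hlogβ : log β = log (β / 3) + log 3 := by
    rw [log_div hβ.ne' (by norm_num)]; ring
  have hent : -β ≤ log (1 - β) * (1 - β) := by
    have := mul_le_mul_of_nonneg_right (one_sub_inv_le_log_of_pos hβ1) hβ1.le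
    rw [sub_mul, inv_mul_cancel₀ hβ1.ne'] at this
    linarith
  have hkey : log 2 * β + (2 / 3 * t + t ^ 2 / 3) ≤ log β * (2 * β) - β := by
    have hc := log_two_add_one_le_two_mul_log_three
    rw [hlogβ, ht]
    nlinarith [mul_nonneg hm0 (by linarith : (0 : ℝ) ≤ 10 - 64 * m),
      mul_nonneg hβ.le (by linarith : (0 : ℝ) ≤ 2 * log 3 - log 2 - 1)]
  calc lhs β = exp (log 2 * β) * (1 / 3 + 2 / 3 * exp t) := by
        rw [lhs, rpow_def_of_pos two_pos, rpow_def_of_pos (by positivity)]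
    _ ≤ exp (log 2 * β) * exp (2 / 3 * t + t ^ 2 / 3) := by
        gcongr; exact one_third_add_two_thirds_exp_le (by linarith)
    _ ≤ exp (log β * (2 * β) + log (1 - β) * (1 - β)) := by
        rw [← exp_add]; exact exp_le_exp.2 (by linarith)
    _ = rhs β := by rw [rhs, rpow_def_of_pos hβ, rpow_def_of_pos hβ1, exp_add]

end BetaBound

open BetaBound

theorem stmt_17 (β : ℝ) (hβ : 0 < β) (hβ' : β ≤ 1 / 4) :
    ((2 : ℝ) ^ β / (β ^ β * (1 - β) ^ (1 - β))) *
      (1 / 3 + (2 / 3) * (β / 3) ^ ((8 : ℝ) * β)) ≤ β ^ β := by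
  have hcleared : lhs β ≤ rhs β := by
    rcases le_or_gt β (1 / 32) with hsmall | hlarge
    · exact lhs_le_rhs_near_zero hβ hsmall
    -- breakpoints `j / 96`, and bounds `R / 1000 ≥ (a / 3) ^ (8 * a)` at the left ends `a`,
    -- found numerically
    · exact lhs_le_rhs_of_chainCertified (N := 96) (D := 1000) (e := 24) (i := 3)
        (l := [(9, 320), (19, 75), (23, 14), (24, 8)]) (by norm_num) (by norm_num) (by decide)
        (by norm_num; linarith) (by norm_num; linarith)
  have hden : 0 < β ^ β * (1 - β) ^ (1 - β) :=
    mul_pos (rpow_pos_of_pos hβ _) (rpow_pos_of_pos (by linarith) _)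
  rw [div_mul_eq_mul_div, div_le_iff₀ hden]
  calc (2 : ℝ) ^ β * (1 / 3 + 2 / 3 * (β / 3) ^ ((8 : ℝ) * β)) = lhs β := rfl
    _ ≤ rhs β := hcleared
    _ = β ^ β * (β ^ β * (1 - β) ^ (1 - β)) := by
        rw [rhs, two_mul, rpow_add hβ, mul_assoc]
end

section
/- Let N ≥ 18 be an integer, c₄ = 2 + 1/N, q ≥ 16N + 9 a real number. Define H(β) = (q−1)·(β/q)^(c₄β). Then for all β with 0 < β ≤ 1/(50·c₄·ln q), H(β) > q/8 ≥ 2N + 1. -/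
theorem stmt_18 (N : ℕ) (hN : 18 ≤ N) (c₄ q : ℝ)
    (hc₄ : c₄ = 2 + 1 / (N : ℝ)) (hq : 16 * (N : ℝ) + 9 ≤ q)
    (β : ℝ) (hβ : 0 < β) (hβ' : β ≤ 1 / (50 * c₄ * Real.log q)) :
    (q - 1) * (β / q) ^ (c₄ * β) > q / 8 ∧ q / 8 ≥ 2 * (N : ℝ) + 1 := by
  have hN18 : (18:ℝ) ≤ (N:ℝ) := by exact_mod_cast hN
  have hq297 : (297:ℝ) ≤ q := by linarith
  have hlogq : 0 < Real.log q := Real.log_pos (by linarith)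
  have hNpos : (0:ℝ) < (N:ℝ) := by linarith
  have hc₄pos : 0 < c₄ := by rw [hc₄]; positivity
  have hc₄le : c₄ ≤ 37/18 := by
    rw [hc₄]
    have : 1/(N:ℝ) ≤ 1/18 := by
      apply one_div_le_one_div_of_le <;> linarith
    linarith
  refine ⟨?_, by linarith⟩
  have hβq : 0 < β / q := div_pos hβ (by linarith)
  rw [Real.rpow_def_of_pos hβq]
  have hlogdiv : Real.log (β/q) = Real.log β - Real.log q :=
    Real.log_div (ne_of_gt hβ) (by linarith)
  -- c₄ * β * log q ≤ 1/50
  have h50 : 0 < 50 * c₄ * Real.log q := by positivity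
  have h1 : c₄ * β * Real.log q ≤ 1/50 := by
    have h := (le_div_iff₀ h50).mp hβ'
    nlinarith
  -- β * log β ≥ -0.368
  have he : (2.7182818283:ℝ) < Real.exp 1 := Real.exp_one_gt_d9
  have hepos := Real.exp_pos 1
  have hlb : (-0.368 : ℝ) ≤ β * Real.log β := by
    have hx : 0 < Real.exp 1 * β := by positivity
    have h2 := Real.log_le_sub_one_of_pos (show (0:ℝ) < (Real.exp 1 * β)⁻¹ by positivity)
    rw [Real.log_inv, Real.log_mul (ne_of_gt hepos) (ne_of_gt hβ), Real.log_exp] at h2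
    -- h2 : -(1 + log β) ≤ (e*β)⁻¹ - 1, so -log β ≤ (e*β)⁻¹
    have h3 : -Real.log β ≤ (Real.exp 1 * β)⁻¹ := by linarith
    have h4 : β * (-Real.log β) ≤ β * (Real.exp 1 * β)⁻¹ :=
      mul_le_mul_of_nonneg_left h3 hβ.le
    have h5 : β * (Real.exp 1 * β)⁻¹ = (Real.exp 1)⁻¹ := by
      field_simp
    have h6 : (Real.exp 1)⁻¹ ≤ 0.368 := by
      rw [inv_le_iff_one_le_mul₀ hepos] <;> nlinarith
    nlinarith
  -- lower bound for the exponent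
  have hA : c₄ * (-0.368 : ℝ) ≤ c₄ * (β * Real.log β) :=
    mul_le_mul_of_nonneg_left hlb hc₄pos.le
  have hB : (37/18 : ℝ) * (-0.368) ≤ c₄ * (-0.368) := by nlinarith
  have htlb : (-0.777 : ℝ) ≤ Real.log (β/q) * (c₄ * β) := by
    rw [hlogdiv]
    have hring : (Real.log β - Real.log q) * (c₄*β)
        = c₄*(β*Real.log β) - c₄*β*Real.log q := by ring
    rw [hring]
    nlinarith
  have haux := Real.add_one_le_exp (Real.log (β/q) * (c₄ * β))
  have hexp : (0.223:ℝ) ≤ Real.exp (Real.log (β/q) * (c₄ * β)) := by linarith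
  nlinarith [mul_le_mul_of_nonneg_left hexp (show (0:ℝ) ≤ q - 1 by linarith)]
end

section
/- Let N ≥ 18 be an integer, c₄ = 2 + 1/N, and q ≥ 16N + 9 a real number. Define g(β) = ((q−1)^β / (β^(2β)·(1−β)^(1−β)))·(1/q + ((q−1)/q)·(β/q)^(c₄β)). Then g(2N/(2N+1)) ≤ 1. -/
/-!
Write β = 2N/(2N+1), so that 1 - β = 1/(2N+1) and c₄β = 2. Taking logarithms, the entropy
factor satisfies `2β log β ≥ 2(β - 1)` (from `x log x ≥ x - 1`), while
`(1 - β)(q - 1) ≥ 8 > e²`; together these bound the first factor of g by q - 1. The second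
factor is then at most `1/q + (q - 1)/q³`, and `(q - 1)(1/q + (q - 1)/q³) ≤ 1` once q ≥ 1/2.
-/

open Real

lemma Real.exp_two_lt_eight : exp 2 < 8 := by
  have h := exp_one_lt_d9
  rw [show (2 : ℝ) = ((2 : ℕ) : ℝ) by norm_num, ← exp_one_pow]
  nlinarith [exp_pos 1]

lemma Real.rpow_div_entropy_le {β x : ℝ} (hβ₀ : 0 < β) (hβ₁ : β < 1)
    (hx : exp 2 ≤ (1 - β) * x) :
    x ^ β / (β ^ (2 * β) * (1 - β) ^ (1 - β)) ≤ x := by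
  have ht : 0 < 1 - β := sub_pos.mpr hβ₁
  have hx₀ : 0 < x := pos_of_mul_pos_right ((exp_pos 2).trans_le hx) ht.le
  have hlog : 2 ≤ log ((1 - β) * x) := (le_log_iff_exp_le (by positivity)).mpr hx
  have hentropy : β - 1 ≤ β * log β := self_sub_one_le_mul_log hβ₀.le
  have hexponent : β * log x - (2 * β * log β + (1 - β) * log (1 - β)) ≤ log x := by
    rw [log_mul ht.ne' hx₀.ne'] at hlog
    nlinarith [mul_le_mul_of_nonneg_left hlog ht.le]
  calc x ^ β / (β ^ (2 * β) * (1 - β) ^ (1 - β))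
      = exp (β * log x - (2 * β * log β + (1 - β) * log (1 - β))) := by
        rw [rpow_def_of_pos hx₀, rpow_def_of_pos hβ₀, rpow_def_of_pos ht, ← exp_add, exp_sub]
        ring_nf
    _ ≤ exp (log x) := exp_le_exp.mpr hexponent
    _ = x := exp_log hx₀

lemma sub_one_mul_one_div_add_sq_le_one {β q : ℝ} (hβ₀ : 0 ≤ β) (hβ₁ : β ≤ 1)
    (hq : 1 / 2 ≤ q) :
    (q - 1) * (1 / q + (q - 1) / q * (β / q) ^ 2) ≤ 1 := by
  have hq₀ : 0 < q := by linarith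
  have hβsq : β ^ 2 ≤ 1 := pow_le_one₀ hβ₀ hβ₁
  rw [div_pow, ← sub_nonneg]
  have hsplit : 1 - (q - 1) * (1 / q + (q - 1) / q * (β ^ 2 / q ^ 2))
      = (q ^ 2 - (q - 1) ^ 2 * β ^ 2) / q ^ 3 := by
    field_simp
    ring
  rw [hsplit]
  have : (q - 1) ^ 2 * β ^ 2 ≤ q ^ 2 := by
    nlinarith [mul_le_mul_of_nonneg_left hβsq (sq_nonneg (q - 1))]
  exact div_nonneg (by linarith) (by positivity)

theorem stmt_19 (N : ℕ) (hN : 18 ≤ N) (c₄ q : ℝ)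
    (hc₄ : c₄ = 2 + 1 / (N : ℝ)) (hq : 16 * (N : ℝ) + 9 ≤ q) :
    ((q - 1) ^ ((2 * (N : ℝ)) / (2 * (N : ℝ) + 1)) /
        (((2 * (N : ℝ)) / (2 * (N : ℝ) + 1)) ^ (2 * ((2 * (N : ℝ)) / (2 * (N : ℝ) + 1))) *
          (1 - (2 * (N : ℝ)) / (2 * (N : ℝ) + 1)) ^ (1 - (2 * (N : ℝ)) / (2 * (N : ℝ) + 1)))) *
      (1 / q + ((q - 1) / q) *
        (((2 * (N : ℝ)) / (2 * (N : ℝ) + 1)) / q) ^ (c₄ * ((2 * (N : ℝ)) / (2 * (N : ℝ) + 1))))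
      ≤ 1 := by
  have hN₀ : (0 : ℝ) < N := by exact_mod_cast (by omega : 0 < N)
  set β : ℝ := 2 * N / (2 * N + 1) with hβ
  have hβ₀ : 0 < β := by positivity
  have hβ₁ : β < 1 := (div_lt_one (by positivity)).mpr (by linarith)
  have hc₄β : c₄ * β = (2 : ℕ) := by
    rw [hc₄, hβ]
    field_simp
    norm_num
  have hgap : exp 2 ≤ (1 - β) * (q - 1) := by
    have h8 : (1 - β) * (q - 1) = (q - 1) / (2 * N + 1) := by
      rw [hβ]
      field_simp
      ring
    rw [h8, le_div_iff₀ (by positivity)]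
    nlinarith [exp_two_lt_eight]
  rw [hc₄β, rpow_natCast]
  calc _ ≤ (q - 1) * (1 / q + (q - 1) / q * (β / q) ^ 2) := by
        gcongr
        · have : 1 < q := by linarith
          positivity
        · exact rpow_div_entropy_le hβ₀ hβ₁ hgap
    _ ≤ 1 := sub_one_mul_one_div_add_sq_le_one hβ₀.le hβ₁.le (by linarith)
end
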